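/- arXiv:math/0402014 — 6 statements merged into one kernel-verified Lean document; each statement's English description precedes it below -/
import Mathlib

section
/- Let F₁, F₂ : Δ → Δ be holomorphic, let λ₂ = liminf_{x → τ} (1 - |F₂(x)|)/(1 - |x|) for a boundary point τ ∈ ∂Δ, and suppose λ₁₂ = liminf_{x → τ} (1 - |F₁(F₂(x))|)/(1 - |x|) satisfies λ₁₂ ≤ 1. Then 0 < λ₂ < +∞, i.e. λ₂ is finite and strictly positive. -/
open Complex Metric Set Filter ENNReal

/-- Key algebraic identity. -/
lemma normSq_mobius_identity (u v : ℂ) :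
    Complex.normSq (1 - (starRingEnd ℂ) v * u) - Complex.normSq (u - v)
      = (1 - Complex.normSq u) * (1 - Complex.normSq v) := by
  simp only [Complex.normSq_apply, Complex.sub_re, Complex.sub_im, Complex.one_re,
    Complex.one_im, Complex.mul_re, Complex.mul_im, Complex.conj_re, Complex.conj_im]
  ring

/-- Schwarz–Pick type bound: `1 - |f z| ≥ (1 - |f 0|)/2 * (1 - |z|)`. -/
lemma schwarz_pick_half (f : ℂ → ℂ)
    (hd : DifferentiableOn ℂ f (ball (0:ℂ) 1))
    (hm : MapsTo f (ball (0:ℂ) 1) (ball (0:ℂ) 1))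
    {z : ℂ} (hz : z ∈ ball (0:ℂ) 1) :
    (1 - ‖f 0‖) / 2 * (1 - ‖z‖) ≤ 1 - ‖f z‖ := by
  set a := f 0 with ha_def
  have h0m : (0:ℂ) ∈ ball (0:ℂ) 1 := mem_ball_self one_pos
  have haA : ‖a‖ < 1 := by simpa [mem_ball, dist_zero_right] using hm h0m
  have hfu : ∀ w ∈ ball (0:ℂ) 1, ‖f w‖ < 1 := by
    intro w hw
    simpa [mem_ball, dist_zero_right] using hm hw
  -- the denominator never vanishes
  have hden : ∀ w ∈ ball (0:ℂ) 1, 1 - (starRingEnd ℂ) a * f w ≠ 0 := by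
    intro w hw h
    have h1 : ‖(starRingEnd ℂ) a * f w‖ < 1 := by
      rw [norm_mul, Complex.norm_conj]
      calc ‖a‖ * ‖f w‖ ≤ 1 * ‖f w‖ :=
            mul_le_mul_of_nonneg_right haA.le (norm_nonneg _)
        _ = ‖f w‖ := one_mul _
        _ < 1 := hfu w hw
    have : (starRingEnd ℂ) a * f w = 1 := by linear_combination -h
    rw [this] at h1; simp at h1
  set g : ℂ → ℂ := fun w => (f w - a) / (1 - (starRingEnd ℂ) a * f w) with hg_def
  have hgd : DifferentiableOn ℂ g (ball (0:ℂ) 1) := by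
    apply DifferentiableOn.div
    · exact hd.sub (differentiableOn_const _)
    · exact (differentiableOn_const _).sub ((differentiableOn_const _).mul hd)
    · exact hden
  have hgm : MapsTo g (ball (0:ℂ) 1) (ball (0:ℂ) 1) := by
    intro w hw
    have hid := normSq_mobius_identity (f w) a
    have hu := hfu w hw
    have hposu : 0 < 1 - Complex.normSq (f w) := by
      have := Complex.sq_norm (f w)
      nlinarith [norm_nonneg (f w)]
    have hposa : 0 < 1 - Complex.normSq a := by
      have := Complex.sq_norm a
      nlinarith [norm_nonneg a]
    have hlt : Complex.normSq (f w - a) < Complex.normSq (1 - (starRingEnd ℂ) a * f w) := by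
      nlinarith
    have habs : ‖f w - a‖ < ‖1 - (starRingEnd ℂ) a * f w‖ := by
      rw [Complex.norm_def, Complex.norm_def]
      exact Real.sqrt_lt_sqrt (Complex.normSq_nonneg _) hlt
    rw [mem_ball, dist_zero_right]
    rw [hg_def]
    simp only [norm_div]
    rw [div_lt_one (lt_of_le_of_lt (norm_nonneg _) habs)]
    exact habs
  have hg0 : g 0 = 0 := by simp [hg_def, ha_def]
  have hzlt : ‖z‖ < 1 := by simpa [mem_ball, dist_zero_right] using hz
  have hstep := Complex.norm_le_norm_of_mapsTo_ball hgd (hgm.mono_right ball_subset_closedBall) hg0 hzlt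
  -- turn into |f z - a| ≤ |z| * |1 - conj a * f z|
  have habs2 : ‖f z - a‖ ≤ ‖z‖ * ‖1 - (starRingEnd ℂ) a * f z‖ := by
    rw [hg_def] at hstep
    simp only [norm_div] at hstep
    have hdpos : 0 < ‖1 - (starRingEnd ℂ) a * f z‖ :=
      norm_pos_iff.mpr (hden z hz)
    calc ‖f z - a‖
        = ‖f z - a‖ / ‖1 - (starRingEnd ℂ) a * f z‖
          * ‖1 - (starRingEnd ℂ) a * f z‖ := (div_mul_cancel₀ _ hdpos.ne').symm
      _ ≤ ‖z‖ * ‖1 - (starRingEnd ℂ) a * f z‖ :=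
          mul_le_mul_of_nonneg_right hstep hdpos.le
  set A := ‖a‖ with hA
  set Z := ‖z‖ with hZ
  set U := ‖f z‖ with hU
  set t := (f z * (starRingEnd ℂ) a).re with ht_def
  have hUlt : U < 1 := hfu z hz
  have hA0 : 0 ≤ A := norm_nonneg _
  have hZ0 : 0 ≤ Z := norm_nonneg _
  have hU0 : 0 ≤ U := norm_nonneg _
  have ht : t ≤ A * U := by
    calc t ≤ |t| := le_abs_self _
      _ ≤ ‖f z * (starRingEnd ℂ) a‖ := Complex.abs_re_le_norm _
      _ = U * A := by rw [norm_mul, Complex.norm_conj]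
      _ = A * U := mul_comm _ _
  -- squared inequality
  have hsq : U ^ 2 + A ^ 2 - 2 * t ≤ Z ^ 2 * (1 + A ^ 2 * U ^ 2 - 2 * t) := by
    have eA : A ^ 2 = Complex.normSq a := Complex.sq_norm a
    have eU : U ^ 2 = Complex.normSq (f z) := Complex.sq_norm (f z)
    have h1 : Complex.normSq (f z - a) = U ^ 2 + A ^ 2 - 2 * t := by
      rw [eA, eU, ht_def]
      simp only [Complex.normSq_apply, Complex.sub_re, Complex.sub_im, Complex.mul_re,
        Complex.mul_im, Complex.conj_re, Complex.conj_im]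
      ring
    have h2 : Complex.normSq (1 - (starRingEnd ℂ) a * f z) = 1 + A ^ 2 * U ^ 2 - 2 * t := by
      rw [eA, eU, ht_def]
      simp only [Complex.normSq_apply, Complex.sub_re, Complex.sub_im, Complex.one_re,
        Complex.one_im, Complex.mul_re, Complex.mul_im, Complex.conj_re, Complex.conj_im]
      ring
    have hmul : Complex.normSq (f z - a)
        ≤ Z ^ 2 * Complex.normSq (1 - (starRingEnd ℂ) a * f z) := by
      rw [← Complex.sq_norm, ← Complex.sq_norm]
      calc ‖f z - a‖ ^ 2
          ≤ (Z * ‖1 - (starRingEnd ℂ) a * f z‖) ^ 2 := by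
            apply pow_le_pow_left₀ (norm_nonneg _) habs2
        _ = Z ^ 2 * ‖1 - (starRingEnd ℂ) a * f z‖ ^ 2 := by ring
    rw [h1, h2] at hmul
    exact hmul
  -- conclude via algebra
  have hQ : U * (1 + A * Z) ≤ A + Z := by
    by_contra h
    push_neg at h
    have hZ1 : 0 < 1 - Z ^ 2 := by nlinarith
    have hquad : U ^ 2 * (1 - Z ^ 2 * A ^ 2) - 2 * A * U * (1 - Z ^ 2) + A ^ 2 - Z ^ 2 ≤ 0 := by
      nlinarith [mul_le_mul_of_nonneg_left ht (le_of_lt hZ1)]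
    have hUA : 0 ≤ 1 - U * A := by nlinarith
    have hfac2 : 0 < U * (1 - A * Z) - (A - Z) := by
      nlinarith [mul_nonneg hZ0 hUA]
    nlinarith [mul_pos (sub_pos.2 h) hfac2]
  have hAZ : 0 ≤ 1 - A * Z := by nlinarith
  nlinarith [mul_nonneg (sub_nonneg.2 hUlt.le) hAZ]

theorem boundary_dilatation_finite_positive
    (F₁ F₂ : ℂ → ℂ)
    (hF₁ : DifferentiableOn ℂ F₁ (ball (0:ℂ) 1))
    (hF₁m : MapsTo F₁ (ball (0:ℂ) 1) (ball (0:ℂ) 1))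
    (hF₂ : DifferentiableOn ℂ F₂ (ball (0:ℂ) 1))
    (hF₂m : MapsTo F₂ (ball (0:ℂ) 1) (ball (0:ℂ) 1))
    (τ : ℂ) (hτ : ‖τ‖ = 1)
    (lam₂ lam₁₂ : ℝ≥0∞)
    (hlam₂ : lam₂ = Filter.liminf
      (fun x => ENNReal.ofReal ((1 - ‖F₂ x‖) / (1 - ‖x‖)))
      (nhdsWithin τ (ball (0:ℂ) 1)))
    (hlam₁₂ : lam₁₂ = Filter.liminf
      (fun x => ENNReal.ofReal ((1 - ‖F₁ (F₂ x)‖) / (1 - ‖x‖)))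
      (nhdsWithin τ (ball (0:ℂ) 1)))
    (hle : lam₁₂ ≤ 1) :
    0 < lam₂ ∧ lam₂ < ⊤ := by
  -- the filter is nontrivial
  have hτmem : τ ∈ closure (ball (0:ℂ) 1) := by
    rw [closure_ball (0:ℂ) one_ne_zero, mem_closedBall, dist_zero_right]
    simp [hτ]
  haveI hne : (nhdsWithin τ (ball (0:ℂ) 1)).NeBot :=
    mem_closure_iff_nhdsWithin_neBot.mp hτmem
  have h0m : (0:ℂ) ∈ ball (0:ℂ) 1 := mem_ball_self one_pos
  -- constants
  set c₁ : ℝ := (1 - ‖F₁ 0‖) / 2 with hc₁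
  set c₂ : ℝ := (1 - ‖F₂ 0‖) / 2 with hc₂
  have hc₁pos : 0 < c₁ := by
    have : ‖F₁ 0‖ < 1 := by
      simpa [mem_ball, dist_zero_right] using hF₁m h0m
    simp only [hc₁]; linarith
  have hc₂pos : 0 < c₂ := by
    have : ‖F₂ 0‖ < 1 := by
      simpa [mem_ball, dist_zero_right] using hF₂m h0m
    simp only [hc₂]; linarith
  constructor
  · -- positivity
    have hev : ∀ᶠ x in nhdsWithin τ (ball (0:ℂ) 1),
        ENNReal.ofReal c₂ ≤ ENNReal.ofReal ((1 - ‖F₂ x‖) / (1 - ‖x‖)) := by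
      filter_upwards [self_mem_nhdsWithin] with x hx
      apply ENNReal.ofReal_le_ofReal
      have hxlt : ‖x‖ < 1 := by simpa [mem_ball, dist_zero_right] using hx
      have hsp := schwarz_pick_half F₂ hF₂ hF₂m hx
      rw [le_div_iff₀ (by linarith : (0:ℝ) < 1 - ‖x‖)]
      exact hsp
    have := Filter.liminf_le_liminf hev
    rw [Filter.liminf_const (ENNReal.ofReal c₂)] at this
    rw [hlam₂]
    exact lt_of_lt_of_le (ENNReal.ofReal_pos.mpr hc₂pos) this
  · -- finiteness
    have hev : ∀ᶠ x in nhdsWithin τ (ball (0:ℂ) 1),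
        ENNReal.ofReal ((1 - ‖F₂ x‖) / (1 - ‖x‖))
          ≤ ENNReal.ofReal c₁⁻¹ *
            ENNReal.ofReal ((1 - ‖F₁ (F₂ x)‖) / (1 - ‖x‖)) := by
      filter_upwards [self_mem_nhdsWithin] with x hx
      have hxlt : ‖x‖ < 1 := by simpa [mem_ball, dist_zero_right] using hx
      have hx1 : (0:ℝ) < 1 - ‖x‖ := by linarith
      have hsp := schwarz_pick_half F₁ hF₁ hF₁m (hF₂m hx)
      have hF₂lt : ‖F₂ x‖ < 1 := by
        simpa [mem_ball, dist_zero_right] using hF₂m hx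
      have hnum : 1 - ‖F₂ x‖ ≤ c₁⁻¹ * (1 - ‖F₁ (F₂ x)‖) := by
        rw [← div_eq_inv_mul, le_div_iff₀ hc₁pos]
        calc (1 - ‖F₂ x‖) * c₁ = c₁ * (1 - ‖F₂ x‖) := mul_comm _ _
          _ ≤ 1 - ‖F₁ (F₂ x)‖ := hsp
      have hreal : (1 - ‖F₂ x‖) / (1 - ‖x‖)
          ≤ c₁⁻¹ * ((1 - ‖F₁ (F₂ x)‖) / (1 - ‖x‖)) := by
        rw [← mul_div_assoc]
        gcongr
      calc ENNReal.ofReal ((1 - ‖F₂ x‖) / (1 - ‖x‖))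
          ≤ ENNReal.ofReal (c₁⁻¹ * ((1 - ‖F₁ (F₂ x)‖) / (1 - ‖x‖))) :=
            ENNReal.ofReal_le_ofReal hreal
        _ = ENNReal.ofReal c₁⁻¹ *
            ENNReal.ofReal ((1 - ‖F₁ (F₂ x)‖) / (1 - ‖x‖)) :=
            ENNReal.ofReal_mul (by positivity)
    have hcont : Continuous (fun y : ℝ≥0∞ => ENNReal.ofReal c₁⁻¹ * y) :=
      ENNReal.continuous_const_mul ENNReal.ofReal_ne_top
    have hmono : Monotone (fun y : ℝ≥0∞ => ENNReal.ofReal c₁⁻¹ * y) :=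
      fun _ _ h => mul_le_mul_right h _
    have heq := hmono.map_liminf_of_continuousAt
      (F := nhdsWithin τ (ball (0:ℂ) 1))
      (fun x => ENNReal.ofReal ((1 - ‖F₁ (F₂ x)‖) / (1 - ‖x‖)))
      (hcont.continuousAt)
    calc lam₂ ≤ Filter.liminf
          (fun x => ENNReal.ofReal c₁⁻¹ *
            ENNReal.ofReal ((1 - ‖F₁ (F₂ x)‖) / (1 - ‖x‖)))
          (nhdsWithin τ (ball (0:ℂ) 1)) := by
          rw [hlam₂]; exact Filter.liminf_le_liminf hev
      _ = ENNReal.ofReal c₁⁻¹ * lam₁₂ := by rw [hlam₁₂]; exact heq.symm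
      _ ≤ ENNReal.ofReal c₁⁻¹ * 1 := mul_le_mul_right hle _
      _ < ⊤ := by simp [ENNReal.ofReal_lt_top]
end

section
/- Let f = (f₁, f₂) : Δ² → Δ² be holomorphic with f₂ ≠ π₂ (the second coordinate projection). Then it is impossible that simultaneously f₂(Δ × E(1,R)) ⊆ E(1,R) for all R > 0 and f₂(Δ × E(-1,R)) ⊆ E(-1,R) for all R > 0, where E(τ, R) = {z ∈ Δ : |τ - z|²/(1 - |z|²) < R} is the horocycle at τ ∈ ∂Δ of radius R. -/
open Complex Metric Set

/-- The horocycle in the unit disc of center `τ ∈ ∂Δ` and radius `R`. -/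
def horocycle (τ : ℂ) (R : ℝ) : Set ℂ :=
  {z ∈ Metric.ball (0:ℂ) 1 | ‖τ - z‖ ^ 2 / (1 - ‖z‖ ^ 2) < R}

set_option maxHeartbeats 1000000 in
/-- Key rigidity at a real point: if `w` lies in the closed horodiscs at `1` and `-1`
through the real point `t`, then `w = t`. -/
lemma key_eq (w : ℂ) (hw : ‖w‖ < 1) (t : ℝ) (ht1 : -1 < t) (ht2 : t < 1)
    (h1 : ‖1 - w‖ ^ 2 / (1 - ‖w‖ ^ 2) ≤ (1 - t) / (1 + t))
    (h2 : ‖-1 - w‖ ^ 2 / (1 - ‖w‖ ^ 2) ≤ (1 + t) / (1 - t)) :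
    w = (t : ℂ) := by
  have hw0 : (0:ℝ) ≤ ‖w‖ := norm_nonneg w
  have hs : 0 < 1 - ‖w‖ ^ 2 := by nlinarith
  set s : ℝ := 1 - ‖w‖ ^ 2 with hs_def
  set a : ℝ := ‖1 - w‖ ^ 2 with ha_def
  set b : ℝ := ‖-1 - w‖ ^ 2 with hb_def
  have htA : 0 < 1 + t := by linarith
  have htB : 0 < 1 - t := by linarith
  -- a * b ≥ s ^ 2
  have habs : s ≤ ‖1 - w ^ 2‖ := by
    have h := norm_sub_norm_le (1:ℂ) (w ^ 2)
    simp only [norm_one, norm_pow] at h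
    linarith
  have habmul : a * b = ‖1 - w ^ 2‖ ^ 2 := by
    have hring : (1 - w) * (-1 - w) = -(1 - w ^ 2) := by ring
    rw [ha_def, hb_def, ← mul_pow, ← norm_mul, hring, norm_neg]
  have hab : s ^ 2 ≤ a * b := by
    rw [habmul]
    nlinarith [hs.le]
  have ha' : a * (1 + t) ≤ (1 - t) * s := by
    rw [div_le_div_iff₀ hs htA] at h1
    linarith
  have hb' : b * (1 - t) ≤ (1 + t) * s := by
    rw [div_le_div_iff₀ hs htB] at h2
    linarith
  have ha0 : 0 < a := by
    have hne : (1:ℂ) - w ≠ 0 := by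
      intro h
      have : w = 1 := by linear_combination -h
      rw [this] at hw; simp at hw
    exact pow_pos (norm_pos_iff.mpr hne) 2
  have hb0 : 0 < b := by
    have hne : (-1:ℂ) - w ≠ 0 := by
      intro h
      have : w = -1 := by linear_combination -h
      rw [this] at hw; simp at hw
    exact pow_pos (norm_pos_iff.mpr hne) 2
  -- product is exactly s^2
  have hub : a * b ≤ s ^ 2 := by
    have hmul : (a * (1 + t)) * (b * (1 - t)) ≤ ((1 - t) * s) * ((1 + t) * s) :=
      mul_le_mul ha' hb' (mul_nonneg hb0.le htB.le) (mul_nonneg htB.le hs.le)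
    nlinarith [mul_pos htA htB]
  have habeq : a * b = s ^ 2 := le_antisymm hub hab
  -- each inequality is an equality
  have haeq' : a * (1 + t) = (1 - t) * s := by
    have hge : (1 - t) * s ≤ a * (1 + t) := by
      have := mul_le_mul_of_nonneg_left hb' ha0.le
      nlinarith [hs]
    linarith
  have hbeq' : b * (1 - t) = (1 + t) * s := by
    have hge : (1 + t) * s ≤ b * (1 - t) := by
      have := mul_le_mul_of_nonneg_left ha' hb0.le
      nlinarith [hs]
    linarith
  -- sum identity : a + b = 4 - 2 s
  have hsum : a + b = 4 - 2 * s := by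
    rw [ha_def, hb_def, hs_def, Complex.sq_norm, Complex.sq_norm, Complex.sq_norm]
    simp only [Complex.normSq_apply, Complex.sub_re, Complex.sub_im, Complex.one_re,
      Complex.one_im, Complex.neg_re, Complex.neg_im]
    ring
  -- derive s = 1 - t ^ 2
  have hseq : s = 1 - t ^ 2 := by
    have e1 : a * (1 + t) * (1 - t) = (1 - t) * s * (1 - t) := by rw [haeq']
    have e2 : b * (1 - t) * (1 + t) = (1 + t) * s * (1 + t) := by rw [hbeq']
    linear_combination (-(1:ℝ)/4) * e1 + (-(1:ℝ)/4) * e2 + ((1 - t^2)/4) * hsum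
  -- derive a = (1-t)^2
  have haeq : a = (1 - t) ^ 2 := by
    have : a * (1 + t) = (1 - t) ^ 2 * (1 + t) := by
      rw [haeq', hseq]; ring
    exact mul_right_cancel₀ (ne_of_gt htA) this
  -- now extract real/imag parts
  have hnsq : Complex.normSq w = t ^ 2 := by
    have h := Complex.sq_norm w
    rw [hs_def] at hseq
    linarith [h, hseq]
  have hre : w.re = t := by
    have h1w : Complex.normSq (1 - w) = (1 - t) ^ 2 := by
      rw [← Complex.sq_norm]; exact haeq
    rw [Complex.normSq_apply] at h1w hnsq
    simp only [Complex.sub_re, Complex.sub_im, Complex.one_re, Complex.one_im] at h1w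
    linear_combination (-(1:ℝ)/2) * h1w + ((1:ℝ)/2) * hnsq
  have him : w.im = 0 := by
    rw [Complex.normSq_apply, hre] at hnsq
    have h0 : w.im * w.im = 0 := by linear_combination hnsq
    exact mul_self_eq_zero.mp h0
  apply Complex.ext <;> simp [hre, him]

set_option maxHeartbeats 1000000 in
theorem no_two_opposite_horocycle_invariance
    (f : ℂ × ℂ → ℂ × ℂ)
    (hf : DifferentiableOn ℂ f (ball (0:ℂ) 1 ×ˢ ball (0:ℂ) 1))
    (hfm : MapsTo f (ball (0:ℂ) 1 ×ˢ ball (0:ℂ) 1) (ball (0:ℂ) 1 ×ˢ ball (0:ℂ) 1))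
    (hne : ∃ p ∈ ball (0:ℂ) 1 ×ˢ ball (0:ℂ) 1, (f p).2 ≠ p.2) :
    ¬ ((∀ R > 0, MapsTo (fun p => (f p).2) (ball (0:ℂ) 1 ×ˢ horocycle 1 R) (horocycle 1 R)) ∧
       (∀ R > 0, MapsTo (fun p => (f p).2) (ball (0:ℂ) 1 ×ˢ horocycle (-1) R) (horocycle (-1) R))) := by
  rintro ⟨h1, h2⟩
  obtain ⟨⟨x₀, y₀⟩, hp, hne2⟩ := hne
  rw [Set.mem_prod] at hp
  set g : ℂ → ℂ := fun y => (f (x₀, y)).2 with hg_def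
  -- g is differentiable on the disc
  have hinner : DifferentiableOn ℂ (fun y : ℂ => ((x₀, y) : ℂ × ℂ)) (ball (0:ℂ) 1) :=
    ((differentiable_const x₀).prodMk differentiable_id).differentiableOn
  have hmaps : MapsTo (fun y : ℂ => ((x₀, y) : ℂ × ℂ)) (ball (0:ℂ) 1)
      (ball (0:ℂ) 1 ×ˢ ball (0:ℂ) 1) := fun y hy => Set.mk_mem_prod hp.1 hy
  have hgd : DifferentiableOn ℂ g (ball (0:ℂ) 1) :=
    differentiable_snd.comp_differentiableOn (hf.comp hinner hmaps)
  -- g fixes every real point of (-1,1)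
  have hfix : ∀ t : ℝ, -1 < t → t < 1 → g (t : ℂ) = (t : ℂ) := by
    intro t ht1 ht2
    have htb : (t : ℂ) ∈ ball (0:ℂ) 1 := by
      simp only [mem_ball, dist_zero_right, Complex.norm_real, Real.norm_eq_abs, abs_lt]
      exact ⟨ht1, ht2⟩
    have hwb : g (t : ℂ) ∈ ball (0:ℂ) 1 := (hfm (Set.mk_mem_prod hp.1 htb)).2
    set w : ℂ := g (t : ℂ) with hw_def
    have hwlt : ‖w‖ < 1 := by
      simpa [mem_ball, Complex.dist_eq] using hwb
    have htA : 0 < 1 + t := by linarith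
    have htB : 0 < 1 - t := by linarith
    have habs_t : ‖((t : ℂ))‖ ^ 2 = t ^ 2 := by
      rw [Complex.norm_real, Real.norm_eq_abs]; exact sq_abs t
    have h1t : ‖1 - (t:ℂ)‖ ^ 2 / (1 - ‖((t:ℂ))‖ ^ 2) = (1 - t) / (1 + t) := by
      have heq : (1 : ℂ) - (t:ℂ) = ((1 - t : ℝ) : ℂ) := by push_cast; ring
      rw [heq, Complex.norm_real, Real.norm_eq_abs, habs_t, abs_of_pos htB]
      rw [div_eq_div_iff (ne_of_gt (by nlinarith : (0:ℝ) < 1 - t ^ 2)) (ne_of_gt htA)]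
      ring
    have h2t : ‖-1 - (t:ℂ)‖ ^ 2 / (1 - ‖((t:ℂ))‖ ^ 2) = (1 + t) / (1 - t) := by
      have heq : (-1 : ℂ) - (t:ℂ) = ((-(1 + t) : ℝ) : ℂ) := by push_cast; ring
      rw [heq, Complex.norm_real, Real.norm_eq_abs, habs_t, abs_neg, abs_of_pos htA]
      rw [div_eq_div_iff (ne_of_gt (by nlinarith : (0:ℝ) < 1 - t ^ 2)) (ne_of_gt htB)]
      ring
    have hc1 : ‖1 - w‖ ^ 2 / (1 - ‖w‖ ^ 2) ≤ (1 - t) / (1 + t) := by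
      by_contra hcon
      push_neg at hcon
      set R := ‖1 - w‖ ^ 2 / (1 - ‖w‖ ^ 2) with hR
      have hRpos : 0 < R := lt_trans (div_pos htB htA) hcon
      have hmem : ((x₀, (t:ℂ)) : ℂ × ℂ) ∈ ball (0:ℂ) 1 ×ˢ horocycle 1 R :=
        Set.mk_mem_prod hp.1 ⟨htb, by rw [h1t]; exact hcon⟩
      exact lt_irrefl R (h1 R hRpos hmem).2
    have hc2 : ‖-1 - w‖ ^ 2 / (1 - ‖w‖ ^ 2) ≤ (1 + t) / (1 - t) := by
      by_contra hcon
      push_neg at hcon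
      set R := ‖-1 - w‖ ^ 2 / (1 - ‖w‖ ^ 2) with hR
      have hRpos : 0 < R := lt_trans (div_pos htA htB) hcon
      have hmem : ((x₀, (t:ℂ)) : ℂ × ℂ) ∈ ball (0:ℂ) 1 ×ˢ horocycle (-1) R :=
        Set.mk_mem_prod hp.1 ⟨htb, by rw [h2t]; exact hcon⟩
      exact lt_irrefl R (h2 R hRpos hmem).2
    exact key_eq w hwlt t ht1 ht2 hc1 hc2
  -- identity theorem : g = id on the disc
  have hga : AnalyticOnNhd ℂ g (ball (0:ℂ) 1) := hgd.analyticOnNhd isOpen_ball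
  have hia : AnalyticOnNhd ℂ (fun z : ℂ => z) (ball (0:ℂ) 1) :=
    (differentiable_id.differentiableOn).analyticOnNhd isOpen_ball
  have hfreq : ∃ᶠ z in nhdsWithin (0:ℂ) {(0:ℂ)}ᶜ, g z = z := by
    have htreal : Filter.Tendsto (fun n : ℕ => (1 / (n + 2) : ℝ)) Filter.atTop (nhds 0) := by
      simp only [one_div]
      exact (Filter.tendsto_atTop_add_const_right _ 2
        tendsto_natCast_atTop_atTop).inv_tendsto_atTop
    have htc : Filter.Tendsto (fun n : ℕ => (((1 / (n + 2) : ℝ)) : ℂ)) Filter.atTop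
        (nhdsWithin (0:ℂ) {(0:ℂ)}ᶜ) := by
      apply tendsto_nhdsWithin_of_tendsto_nhds_of_eventually_within
      · have h : Filter.Tendsto (fun x : ℝ => (x : ℂ)) (nhds 0) (nhds ((0:ℝ) : ℂ)) :=
          Complex.continuous_ofReal.tendsto 0
        simpa [Function.comp_def] using h.comp htreal
      · filter_upwards with n
        simp only [Set.mem_compl_iff, Set.mem_singleton_iff]
        intro hcon
        have hreal : (1 / (n + 2) : ℝ) = 0 := by exact_mod_cast hcon
        have hn : (0:ℝ) < (n:ℝ) + 2 := by positivity
        rw [div_eq_zero_iff] at hreal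
        rcases hreal with h | h
        · norm_num at h
        · linarith
    apply htc.frequently
    apply Filter.Eventually.frequently
    apply Filter.Eventually.of_forall
    intro n
    have hn2 : (0:ℝ) < (n:ℝ) + 2 := by positivity
    have h1n : (1 / (n + 2) : ℝ) < 1 := by
      rw [div_lt_one hn2]; linarith
    have h2n : (-1 : ℝ) < 1 / (n + 2) := by
      have : (0:ℝ) < 1 / (n + 2) := by positivity
      linarith
    exact hfix _ h2n h1n
  have heq : EqOn g (fun z : ℂ => z) (ball (0:ℂ) 1) :=
    hga.eqOn_of_preconnected_of_frequently_eq hia (convex_ball (0:ℂ) 1).isPreconnected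
      (mem_ball_self one_pos) hfreq
  exact hne2 (heq hp.2)
end

section
/- Let f = (f₁, f₂) : Δ² → Δ² be holomorphic without fixed points in Δ². Then it cannot happen that both (1,1) and (−1,−1) are Wolff points of f, i.e. it cannot hold that f(E(1,R) × E(1,R)) ⊆ E(1,R) × E(1,R) and f(E(−1,R) × E(−1,R)) ⊆ E(−1,R) × E(−1,R) for all R > 0. -/
open Complex Metric Set

private lemma mem_horocycle {τ : ℂ} {R : ℝ} {z : ℂ} :
    z ∈ horocycle τ R ↔ z ∈ Metric.ball (0:ℂ) 1 ∧
      ‖τ - z‖ ^ 2 / (1 - ‖z‖ ^ 2) < R := Iff.rfl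

private lemma key_zero (w : ℂ) (hw : ‖w‖ < 1)
    (h1 : ‖1 - w‖ ^ 2 ≤ 1 - ‖w‖ ^ 2)
    (h2 : ‖1 + w‖ ^ 2 ≤ 1 - ‖w‖ ^ 2) : w = 0 := by
  clear hw
  have e1 : ‖1 - w‖ ^ 2 = Complex.normSq (1 - w) := Complex.sq_norm _
  have e2 : ‖1 + w‖ ^ 2 = Complex.normSq (1 + w) := Complex.sq_norm _
  have e3 : ‖w‖ ^ 2 = Complex.normSq w := Complex.sq_norm _
  rw [e1, e3] at h1
  rw [e2, e3] at h2
  simp only [Complex.normSq_apply, Complex.sub_re, Complex.sub_im, Complex.add_re,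
    Complex.add_im, Complex.one_re, Complex.one_im] at h1 h2
  have hre : w.re = 0 ∧ w.im = 0 := by constructor <;> nlinarith [sq_nonneg w.re, sq_nonneg w.im]
  exact Complex.ext hre.1 hre.2

private lemma forall_lt_imp_le {q : ℝ} (h : ∀ R : ℝ, 1 < R → q < R) : q ≤ 1 := by
  by_contra hq
  push_neg at hq
  exact absurd (h q hq) (lt_irrefl q)

theorem not_both_silov_wolff_points
    (f : ℂ × ℂ → ℂ × ℂ)
    (hf : DifferentiableOn ℂ f (ball (0:ℂ) 1 ×ˢ ball (0:ℂ) 1))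
    (hfm : MapsTo f (ball (0:ℂ) 1 ×ˢ ball (0:ℂ) 1) (ball (0:ℂ) 1 ×ˢ ball (0:ℂ) 1))
    (hnofix : ∀ p ∈ ball (0:ℂ) 1 ×ˢ ball (0:ℂ) 1, f p ≠ p) :
    ¬ ((∀ R > 0, MapsTo f (horocycle 1 R ×ˢ horocycle 1 R) (horocycle 1 R ×ˢ horocycle 1 R)) ∧
       (∀ R > 0, MapsTo f (horocycle (-1) R ×ˢ horocycle (-1) R)
          (horocycle (-1) R ×ˢ horocycle (-1) R))) := by
  rintro ⟨h1, h2⟩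
  have h0ball : (0:ℂ) ∈ ball (0:ℂ) 1 := by simp
  have h00 : ((0:ℂ), (0:ℂ)) ∈ ball (0:ℂ) 1 ×ˢ ball (0:ℂ) 1 := ⟨h0ball, h0ball⟩
  have hfb := hfm h00
  rw [Set.mem_prod] at hfb
  set a := (f (0,0)).1 with ha
  set b := (f (0,0)).2 with hb
  have hab1 : ‖a‖ < 1 := by simpa [Complex.norm_def] using hfb.1
  have hab2 : ‖b‖ < 1 := by simpa [Complex.norm_def] using hfb.2
  have mem1 : ∀ R : ℝ, 1 < R → (0:ℂ) ∈ horocycle 1 R := by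
    intro R hR
    rw [mem_horocycle]
    exact ⟨h0ball, by simpa using hR⟩
  have mem2 : ∀ R : ℝ, 1 < R → (0:ℂ) ∈ horocycle (-1) R := by
    intro R hR
    rw [mem_horocycle]
    exact ⟨h0ball, by simpa using hR⟩
  have bnd : ∀ (w : ℂ) (τ : ℂ),
      (∀ R : ℝ, 1 < R → ‖τ - w‖ ^ 2 / (1 - ‖w‖ ^ 2) < R) →
      ‖w‖ < 1 → ‖τ - w‖ ^ 2 ≤ 1 - ‖w‖ ^ 2 := by
    intro w τ h hw
    have hq := forall_lt_imp_le h
    have hpos : 0 < 1 - ‖w‖ ^ 2 := by nlinarith [norm_nonneg w]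
    calc ‖τ - w‖ ^ 2 = ‖τ - w‖ ^ 2 / (1 - ‖w‖ ^ 2) *
        (1 - ‖w‖ ^ 2) := by field_simp
      _ ≤ 1 * (1 - ‖w‖ ^ 2) := mul_le_mul_of_nonneg_right hq hpos.le
      _ = 1 - ‖w‖ ^ 2 := one_mul _
  have ha1 : ∀ R : ℝ, 1 < R → ‖1 - a‖ ^ 2 / (1 - ‖a‖ ^ 2) < R := by
    intro R hR
    have hm := h1 R (by linarith) (Set.mk_mem_prod (mem1 R hR) (mem1 R hR))
    rw [Set.mem_prod, mem_horocycle, mem_horocycle] at hm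
    exact hm.1.2
  have ha2 : ∀ R : ℝ, 1 < R → ‖-1 - a‖ ^ 2 / (1 - ‖a‖ ^ 2) < R := by
    intro R hR
    have hm := h2 R (by linarith) (Set.mk_mem_prod (mem2 R hR) (mem2 R hR))
    rw [Set.mem_prod, mem_horocycle, mem_horocycle] at hm
    exact hm.1.2
  have hb1 : ∀ R : ℝ, 1 < R → ‖1 - b‖ ^ 2 / (1 - ‖b‖ ^ 2) < R := by
    intro R hR
    have hm := h1 R (by linarith) (Set.mk_mem_prod (mem1 R hR) (mem1 R hR))
    rw [Set.mem_prod, mem_horocycle, mem_horocycle] at hm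
    exact hm.2.2
  have hb2 : ∀ R : ℝ, 1 < R → ‖-1 - b‖ ^ 2 / (1 - ‖b‖ ^ 2) < R := by
    intro R hR
    have hm := h2 R (by linarith) (Set.mk_mem_prod (mem2 R hR) (mem2 R hR))
    rw [Set.mem_prod, mem_horocycle, mem_horocycle] at hm
    exact hm.2.2
  have haz : a = 0 := by
    apply key_zero a hab1 (bnd a 1 ha1 hab1)
    calc ‖1 + a‖ ^ 2 = ‖-1 - a‖ ^ 2 := by
          rw [show (-1 : ℂ) - a = -(1 + a) by ring, norm_neg]
      _ ≤ _ := bnd a (-1) ha2 hab1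
  have hbz : b = 0 := by
    apply key_zero b hab2 (bnd b 1 hb1 hab2)
    calc ‖1 + b‖ ^ 2 = ‖-1 - b‖ ^ 2 := by
          rw [show (-1 : ℂ) - b = -(1 + b) by ring, norm_neg]
      _ ≤ _ := bnd b (-1) hb2 hab2
  apply hnofix (0,0) h00
  have hfab : f (0,0) = (a, b) := rfl
  rw [hfab, haz, hbz]
end

section
/- Define f : Δ² → Δ² by f(x,y) = ((1/2)(x + y²), (1/2)(y + (3x+1)/(x+3))). Then f is a well-defined holomorphic self-map of the bidisc and f has no fixed point in Δ². -/
open Complex Metric Set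

private lemma denom_ne (x : ℂ) (hx : ‖x‖ < 1) : x + 3 ≠ 0 := by
  intro h
  have : x = -3 := by linear_combination h
  rw [this] at hx
  norm_num at hx

private lemma mob_lt (x : ℂ) (hx : ‖x‖ < 1) : ‖(3 * x + 1) / (x + 3)‖ < 1 := by
  have hd := denom_ne x hx
  rw [norm_div, div_lt_one (norm_pos_iff.mpr hd)]
  have hn : Complex.normSq x < 1 := by
    rw [Complex.normSq_eq_norm_sq]
    nlinarith [norm_nonneg x]
  have h1 : Complex.normSq (3 * x + 1) < Complex.normSq (x + 3) := by
    simp only [Complex.normSq_apply, Complex.add_re, Complex.add_im, Complex.mul_re,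
      Complex.mul_im, Complex.re_ofNat, Complex.im_ofNat, Complex.one_re, Complex.one_im] at *
    nlinarith
  rw [Complex.norm_def, Complex.norm_def]
  exact Real.sqrt_lt_sqrt (Complex.normSq_nonneg _) h1

theorem example_first_type_no_fixed_points :
    ∀ f : ℂ × ℂ → ℂ × ℂ,
      (∀ p : ℂ × ℂ, f p = ((1/2) * (p.1 + p.2 ^ 2), (1/2) * (p.2 + (3 * p.1 + 1) / (p.1 + 3)))) →
      MapsTo f (ball (0:ℂ) 1 ×ˢ ball (0:ℂ) 1) (ball (0:ℂ) 1 ×ˢ ball (0:ℂ) 1) ∧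
      DifferentiableOn ℂ f (ball (0:ℂ) 1 ×ˢ ball (0:ℂ) 1) ∧
      ∀ p ∈ ball (0:ℂ) 1 ×ˢ ball (0:ℂ) 1, f p ≠ p := by
  intro f hf
  have hfun : f = fun p : ℂ × ℂ =>
      (((1:ℂ)/2) * (p.1 + p.2 ^ 2), ((1:ℂ)/2) * (p.2 + (3 * p.1 + 1) / (p.1 + 3))) :=
    funext hf
  refine ⟨?_, ?_, ?_⟩
  · rintro ⟨x, y⟩ ⟨hx, hy⟩
    simp only [mem_ball, dist_zero_right] at hx hy
    rw [hf]
    constructor <;> simp only [mem_ball, dist_zero_right]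
    · calc ‖(1/2 : ℂ) * (x + y ^ 2)‖ ≤ (1/2) * (‖x‖ + ‖y‖ ^ 2) := by
            rw [norm_mul]
            gcongr
            · norm_num
            · exact (norm_add_le _ _).trans (by rw [norm_pow])
      _ < 1 := by nlinarith [norm_nonneg y]
    · have hm := mob_lt x hx
      calc ‖(1/2 : ℂ) * (y + (3 * x + 1) / (x + 3))‖
          ≤ (1/2) * (‖y‖ + ‖(3 * x + 1) / (x + 3)‖) := by
            rw [norm_mul]
            gcongr
            · norm_num
            · exact norm_add_le _ _
      _ < 1 := by nlinarith
  · rw [hfun]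
    apply DifferentiableOn.prodMk
    · fun_prop
    · apply DifferentiableOn.mul (differentiableOn_const _)
      apply DifferentiableOn.add (differentiableOn_snd)
      have hz : ∀ p ∈ ball (0:ℂ) 1 ×ˢ ball (0:ℂ) 1, (fun p : ℂ × ℂ => p.1 + 3) p ≠ 0 := by
        rintro ⟨x, y⟩ ⟨hx, hy⟩
        simp only [mem_ball, dist_zero_right] at hx
        exact denom_ne x hx
      simp only [div_eq_mul_inv]
      exact DifferentiableOn.mul (by fun_prop) ((by fun_prop : DifferentiableOn ℂ
        (fun p : ℂ × ℂ => p.1 + 3) _).inv hz)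
  · rintro ⟨x, y⟩ ⟨hx, hy⟩ hfix
    simp only [mem_ball, dist_zero_right] at hx hy
    rw [hf] at hfix
    have h1 : (1/2 : ℂ) * (x + y ^ 2) = x := congrArg Prod.fst hfix
    have h2 : (1/2 : ℂ) * (y + (3 * x + 1) / (x + 3)) = y := congrArg Prod.snd hfix
    have hxy : x = y ^ 2 := by linear_combination -2 * h1
    have hd := denom_ne x hx
    have h3 : y * (x + 3) = 3 * x + 1 := by
      field_simp at h2
      linear_combination -h2
    have h4 : (y - 1) ^ 3 = 0 := by
      rw [hxy] at h3
      linear_combination h3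
    have : y = 1 := by
      have := pow_eq_zero_iff (n := 3) (by norm_num) |>.mp h4
      linear_combination this
    rw [this] at hy
    norm_num at hy
end

section
/- Define f₁ : Δ² → Δ by f₁(x,y) = (1/2)(x + y²). Then liminf_{(x,y)→(1,1)} [max(ω(0,x), ω(0,y)) − ω(0, f₁(x,y))] > 0, where ω is the Poincaré distance on Δ. Consequently the boundary dilatation coefficient α of f₁ at (1,1) satisfies α > 1. -/
open Complex Metric Set Filter

noncomputable def poincareFromZero (z : ℂ) : ℝ :=
  (1/2) * Real.log ((1 + ‖z‖) / (1 - ‖z‖))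

private lemma g_mono' {r s : ℝ} (h0 : 0 ≤ r) (hrs : r ≤ s) (hs : s < 1) :
    (1/2) * Real.log ((1 + r) / (1 - r)) ≤ (1/2) * Real.log ((1 + s) / (1 - s)) := by
  have h1 : (0:ℝ) < 1 - s := by linarith
  have h2 : (0:ℝ) < 1 - r := by linarith
  have key : (1 + r) / (1 - r) ≤ (1 + s) / (1 - s) := by
    rw [div_le_div_iff₀ h2 h1]; nlinarith
  have hpos : (0:ℝ) < (1 + r) / (1 - r) := by positivity
  have := Real.log_le_log hpos key
  linarith

private lemma u1_lb' {m a : ℝ} (ha : 0 ≤ a) (hma : a ≤ (m + m^2)/2) (hm : 9/10 ≤ m)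
    (hm1 : m < 1) :
    (1/2) * Real.log (11/10) ≤
      (1/2) * Real.log ((1 + m) / (1 - m)) - (1/2) * Real.log ((1 + a) / (1 - a)) := by
  have ha1 : a < 1 := by nlinarith
  have h1m : (0:ℝ) < 1 - m := by linarith
  have h1a : (0:ℝ) < 1 - a := by linarith
  have key : (11/10) * ((1 + a) / (1 - a)) ≤ (1 + m) / (1 - m) := by
    rw [mul_div_assoc', div_le_div_iff₀ h1a h1m]
    nlinarith
  have hpos : (0:ℝ) < (1 + a) / (1 - a) := by positivity
  have hlog := Real.log_le_log (by positivity) key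
  rw [Real.log_mul (by norm_num) (ne_of_gt hpos)] at hlog
  linarith

private lemma diag_ub' {t : ℝ} (h0 : 0 ≤ t) (h1 : t < 1) :
    (1/2) * Real.log ((1 + t) / (1 - t))
      - (1/2) * Real.log ((1 + (t + t^2)/2) / (1 - (t + t^2)/2)) ≤ 2 ∧
    (1 - (t + t^2)/2) / (1 - t) ≤ 2 := by
  set a : ℝ := (t + t^2)/2 with ha
  have ha0 : 0 ≤ a := by positivity
  have ha1 : a < 1 := by nlinarith
  have h1t : (0:ℝ) < 1 - t := by linarith
  have h1a : (0:ℝ) < 1 - a := by linarith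
  constructor
  · have key : (1 + t) / (1 - t) ≤ 3 * ((1 + a) / (1 - a)) := by
      rw [mul_div_assoc', div_le_div_iff₀ h1t h1a]
      nlinarith
    have hpos : (0:ℝ) < (1 + a) / (1 - a) := by positivity
    have hlog := Real.log_le_log (by positivity) key
    rw [Real.log_mul (by norm_num) (ne_of_gt hpos)] at hlog
    have h3 : Real.log 3 ≤ 2 := by
      have := Real.log_le_sub_one_of_pos (by norm_num : (0:ℝ) < 3)
      linarith
    linarith
  · rw [div_le_iff₀ h1t]; nlinarith

private lemma seq_tendsto' :
    Tendsto (fun n : ℕ => ((((1 - 1/(n+2) : ℝ)) : ℂ), (((1 - 1/(n+2) : ℝ)) : ℂ)))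
      atTop (nhdsWithin ((1:ℂ), (1:ℂ)) (ball (0:ℂ) 1 ×ˢ ball (0:ℂ) 1)) := by
  apply tendsto_nhdsWithin_of_tendsto_nhds_of_eventually_within
  · have hd : Tendsto (fun n : ℕ => ((n:ℝ)+2)) atTop atTop :=
      tendsto_natCast_atTop_atTop.atTop_add tendsto_const_nhds
    have h0 : Tendsto (fun n : ℕ => (1 - 1/(n+2) : ℝ)) atTop (nhds 1) := by
      have := hd.inv_tendsto_atTop
      have h := (tendsto_const_nhds (x := (1:ℝ)) (f := atTop (α := ℕ))).sub this
      simpa [one_div] using h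
    have hc : Tendsto (fun n : ℕ => (((1 - 1/(n+2) : ℝ)) : ℂ)) atTop (nhds 1) := by
      have := (Complex.continuous_ofReal.tendsto 1).comp h0
      simpa only [Function.comp_def, Complex.ofReal_one] using this
    rw [nhds_prod_eq]
    exact hc.prodMk hc
  · apply Eventually.of_forall
    intro n
    have hn2 : (0:ℝ) < (n:ℝ) + 2 := by positivity
    have hlt : 1/((n:ℝ)+2) ≤ 1/2 := by
      apply div_le_div_of_nonneg_left (by norm_num) (by norm_num)
      · norm_num
    have hpos : 0 < 1/((n:ℝ)+2) := by positivity
    constructor <;>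
    · simp only [mem_ball, dist_zero_right, Complex.norm_real, Real.norm_eq_abs]
      rw [_root_.abs_of_nonneg (by linarith)]
      linarith

theorem example_dilatation_gt_one :
    ∀ f₁ : ℂ × ℂ → ℂ,
      (∀ p : ℂ × ℂ, f₁ p = (1/2) * (p.1 + p.2 ^ 2)) →
      0 < Filter.liminf
          (fun p : ℂ × ℂ =>
            max (poincareFromZero p.1) (poincareFromZero p.2) - poincareFromZero (f₁ p))
          (nhdsWithin ((1:ℂ), (1:ℂ)) (ball (0:ℂ) 1 ×ˢ ball (0:ℂ) 1)) ∧
      1 < Filter.liminf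
          (fun p : ℂ × ℂ =>
            (1 - ‖f₁ p‖) / (1 - max (‖p.1‖) (‖p.2‖)))
          (nhdsWithin ((1:ℂ), (1:ℂ)) (ball (0:ℂ) 1 ×ˢ ball (0:ℂ) 1)) := by
  intro f₁ hf
  set S : Set (ℂ × ℂ) := ball (0:ℂ) 1 ×ˢ ball (0:ℂ) 1 with hS
  set L := nhdsWithin ((1:ℂ), (1:ℂ)) S with hL
  set u₁ : ℂ × ℂ → ℝ := fun p =>
    max (poincareFromZero p.1) (poincareFromZero p.2) - poincareFromZero (f₁ p) with hu1
  set u₂ : ℂ × ℂ → ℝ := fun p =>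
    (1 - ‖f₁ p‖) / (1 - max (‖p.1‖) (‖p.2‖)) with hu2
  -- value of f₁ and its modulus bound
  have habs_half : ‖(1/2 : ℂ)‖ = 1/2 := by
    rw [norm_div]; simp
  -- eventual lower bounds
  have hmem : ∀ᶠ p in L, p ∈ S := eventually_mem_nhdsWithin
  have hnear : ∀ᶠ p in L, ‖p.1 - 1‖ < 1/10 := by
    have hc : ContinuousAt (fun p : ℂ × ℂ => ‖p.1 - 1‖) ((1:ℂ), (1:ℂ)) :=
      (continuous_norm.comp (continuous_fst.sub continuous_const)).continuousAt
    have := hc.eventually_lt (continuousAt_const (y := (1/10 : ℝ))) (by norm_num)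
    exact this.filter_mono nhdsWithin_le_nhds
  have hev : ∀ᶠ p in L, (1/2) * Real.log (11/10) ≤ u₁ p ∧ (29/20 : ℝ) ≤ u₂ p := by
    filter_upwards [hmem, hnear] with p hp hq
    obtain ⟨x, y⟩ := p
    simp only [hS, mem_prod, mem_ball, dist_zero_right] at hp
    obtain ⟨hx, hy⟩ := hp
    set m : ℝ := max (‖x‖) (‖y‖) with hm
    have hm1 : m < 1 := max_lt hx hy
    have hx9 : (9:ℝ)/10 ≤ ‖x‖ := by
      have h1 : ‖(1:ℂ)‖ - ‖x‖ ≤ ‖(1:ℂ) - x‖ := norm_sub_norm_le _ _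
      rw [norm_sub_rev] at h1
      simp only [norm_one] at h1
      have : ‖x - 1‖ < 1/10 := hq
      linarith
    have hm9 : (9:ℝ)/10 ≤ m := le_trans hx9 (le_max_left _ _)
    have h1m : (0:ℝ) < 1 - m := by linarith
    set a : ℝ := ‖f₁ (x, y)‖ with haa
    have ha0 : 0 ≤ a := norm_nonneg _
    have hma : a ≤ (m + m^2)/2 := by
      rw [haa, hf]
      simp only [norm_mul, habs_half]
      have h2 : ‖(x, y).1 + (x, y).2 ^ 2‖ ≤ ‖x‖ + (‖y‖)^2 := by
        refine le_trans (norm_add_le _ _) ?_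
        simp [norm_pow]
      have h3 : ‖x‖ ≤ m := le_max_left _ _
      have h4 : (‖y‖)^2 ≤ m^2 := by
        have := le_max_right (‖x‖) (‖y‖)
        nlinarith [norm_nonneg y]
      nlinarith
    have ha1 : a < 1 := by nlinarith
    have hmax : max (poincareFromZero x) (poincareFromZero y) =
        (1/2) * Real.log ((1 + m) / (1 - m)) := by
      rcases le_total (‖x‖) (‖y‖) with h | h
      · have hle : poincareFromZero x ≤ poincareFromZero y :=
          g_mono' (norm_nonneg _) h hy
        rw [max_eq_right hle, hm, max_eq_right h]; rfl
      · have hle : poincareFromZero y ≤ poincareFromZero x :=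
          g_mono' (norm_nonneg _) h hx
        rw [max_eq_left hle, hm, max_eq_left h]; rfl
    constructor
    · have := u1_lb' ha0 hma hm9 hm1
      simp only [hu1, hmax]
      calc (1/2) * Real.log (11/10)
          ≤ (1/2) * Real.log ((1 + m) / (1 - m)) - (1/2) * Real.log ((1 + a) / (1 - a)) := this
        _ = (1/2) * Real.log ((1 + m) / (1 - m)) - poincareFromZero (f₁ (x, y)) := by
            rw [poincareFromZero, ← haa]
    · simp only [hu2, ← haa, ← hm]
      rw [le_div_iff₀ h1m]
      nlinarith [mul_nonneg (by linarith : (0:ℝ) ≤ m - 9/10) (by linarith : (0:ℝ) ≤ 1 - m)]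
  -- frequent upper bounds along the real diagonal
  have hfreq : ∃ᶠ p in L, u₁ p ≤ 2 ∧ u₂ p ≤ 2 := by
    apply seq_tendsto'.frequently
    apply Frequently.of_forall
    intro n
    set t : ℝ := 1 - 1/(n+2) with ht
    have hn2 : (0:ℝ) < (n:ℝ) + 2 := by positivity
    have hlt : 1/((n:ℝ)+2) ≤ 1/2 := by
      apply div_le_div_of_nonneg_left (by norm_num) (by norm_num); norm_num
    have hpos : 0 < 1/((n:ℝ)+2) := by positivity
    have ht0 : 0 ≤ t := by rw [ht]; linarith
    have ht1 : t < 1 := by rw [ht]; linarith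
    have habs : ‖((t : ℝ) : ℂ)‖ = t := by
      rw [Complex.norm_real, Real.norm_of_nonneg ht0]
    have hfval : f₁ (((t : ℝ) : ℂ), ((t : ℝ) : ℂ)) = ((((t + t^2)/2 : ℝ)) : ℂ) := by
      rw [hf]; push_cast; ring
    have habsf : ‖f₁ (((t : ℝ) : ℂ), ((t : ℝ) : ℂ))‖ = (t + t^2)/2 := by
      rw [hfval, Complex.norm_real, Real.norm_of_nonneg (by positivity)]
    obtain ⟨hd1, hd2⟩ := diag_ub' ht0 ht1
    constructor
    · simp only [hu1, poincareFromZero, habs, habsf, max_self]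
      exact hd1
    · simp only [hu2, habs, habsf, max_self]
      exact hd2
  have cob : ∀ u : ℂ × ℂ → ℝ, (∃ᶠ p in L, u p ≤ 2) → IsCoboundedUnder (· ≥ ·) L u := by
    intro u hu
    refine ⟨2, fun b hb => ?_⟩
    rw [eventually_map] at hb
    obtain ⟨p, h2, hge⟩ := (hu.and_eventually hb).exists
    exact le_trans hge h2
  have cob1 : IsCoboundedUnder (· ≥ ·) L u₁ := cob u₁ (hfreq.mono fun p h => h.1)
  have cob2 : IsCoboundedUnder (· ≥ ·) L u₂ := cob u₂ (hfreq.mono fun p h => h.2)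
  constructor
  · have h := le_liminf_of_le cob1 (hev.mono fun p h => h.1)
    have hpos : (0:ℝ) < (1/2) * Real.log (11/10) := by
      have := Real.log_pos (by norm_num : (1:ℝ) < 11/10)
      linarith
    exact lt_of_lt_of_le hpos h
  · have h := le_liminf_of_le cob2 (hev.mono fun p h => h.2)
    exact lt_of_lt_of_le (by norm_num : (1:ℝ) < 29/20) h
end

section
/- For τ = 1 and τ = −1 in ∂Δ and R = 1, the point 0 lies on the boundary of both horocycles: 0 ∈ ∂E(1,1) ∩ ∂E(−1,1), where E(τ,R) = {z ∈ Δ : |τ − z|²/(1 − |z|²) < R}. Moreover, if z ∈ closure(E(1,R₁)) ∩ closure(E(−1,R₂)) with |1−z|²/(1−|z|²) = R₁, |1+z|²/(1−|z|²) = R₂ and R₁R₂ = 1, then any holomorphic h : Δ → Δ with h(E(1,R)) ⊆ E(1,R) and h(E(−1,R)) ⊆ E(−1,R) for all R > 0 satisfies h(z) = z; in particular h(0) = 0. -/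
open Complex Metric Set

lemma key_im (z : ℂ)
    (hle : ‖1 - z‖ ^ 2 * ‖1 + z‖ ^ 2 ≤ (1 - ‖z‖ ^ 2) ^ 2) :
    z.im = 0 := by
  rw [Complex.sq_norm, Complex.sq_norm, Complex.sq_norm] at hle
  simp only [Complex.normSq_apply, Complex.sub_re, Complex.sub_im, Complex.add_re,
    Complex.add_im, Complex.one_re, Complex.one_im] at hle
  have h2 : z.im ^ 2 ≤ 0 := by nlinarith
  have h3 : z.im ^ 2 = 0 := le_antisymm h2 (sq_nonneg _)
  exact (pow_eq_zero_iff two_ne_zero).mp h3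

lemma abs_neg_one_sub (z : ℂ) : ‖-1 - z‖ = ‖1 + z‖ := by
  rw [show (-1 - z : ℂ) = -(1 + z) by ring, norm_neg]

lemma real_step {x u R1 R2 : ℝ} (hx2 : x ^ 2 < 1) (hu2 : u ^ 2 < 1)
    (e1 : (1 - x) ^ 2 = R1 * (1 - x ^ 2)) (e2 : (1 + x) ^ 2 = R2 * (1 - x ^ 2))
    (m1 : (1 - u) ^ 2 ≤ R1 * (1 - u ^ 2)) (m2 : (1 + u) ^ 2 ≤ R2 * (1 - u ^ 2)) :
    u = x := by
  have hx := abs_lt.mp (show |x| < 1 by nlinarith [abs_nonneg x, _root_.sq_abs x])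
  have hu := abs_lt.mp (show |u| < 1 by nlinarith [abs_nonneg u, _root_.sq_abs u])
  have hxd : (0:ℝ) < 1 - x ^ 2 := by linarith
  have hud : (0:ℝ) < 1 - u ^ 2 := by linarith
  have I1 : (1 - u) ^ 2 * (1 - x ^ 2) ≤ (1 - x) ^ 2 * (1 - u ^ 2) := by
    nlinarith [mul_le_mul_of_nonneg_right m1 hxd.le]
  have I2 : (1 + u) ^ 2 * (1 - x ^ 2) ≤ (1 + x) ^ 2 * (1 - u ^ 2) := by
    nlinarith [mul_le_mul_of_nonneg_right m2 hxd.le]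
  have hxu : x ≤ u := by
    nlinarith [mul_pos (show (0:ℝ) < 1 - x by linarith) (show (0:ℝ) < 1 - u by linarith)]
  have hux : u ≤ x := by
    nlinarith [mul_pos (show (0:ℝ) < 1 + x by linarith) (show (0:ℝ) < 1 + u by linarith)]
  linarith

lemma fix_aux (h : ℂ → ℂ)
    (hhm : MapsTo h (ball (0:ℂ) 1) (ball (0:ℂ) 1))
    (hinv1 : ∀ R > 0, MapsTo h (horocycle 1 R) (horocycle 1 R))
    (hinv2 : ∀ R > 0, MapsTo h (horocycle (-1) R) (horocycle (-1) R))
    (z : ℂ) (hz : z ∈ ball (0:ℂ) 1) (R₁ R₂ : ℝ)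
    (e1 : ‖1 - z‖ ^ 2 / (1 - ‖z‖ ^ 2) = R₁)
    (e2 : ‖1 + z‖ ^ 2 / (1 - ‖z‖ ^ 2) = R₂)
    (prod : R₁ * R₂ = 1) : h z = z := by
  have hz1 : ‖z‖ < 1 := mem_ball_zero_iff.mp hz
  have hd : 0 < 1 - ‖z‖ ^ 2 := by nlinarith [norm_nonneg z]
  have hR1nn : 0 ≤ R₁ := e1 ▸ div_nonneg (sq_nonneg _) hd.le
  have hR2nn : 0 ≤ R₂ := e2 ▸ div_nonneg (sq_nonneg _) hd.le
  have hR1pos : 0 < R₁ := lt_of_le_of_ne hR1nn (by rintro rfl; simp at prod)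
  have hR2pos : 0 < R₂ := lt_of_le_of_ne hR2nn (by rintro rfl; simp at prod)
  set w := h z with hw
  have hwb : w ∈ ball (0:ℂ) 1 := hhm hz
  have hw1 : ‖w‖ < 1 := mem_ball_zero_iff.mp hwb
  have hdw : 0 < 1 - ‖w‖ ^ 2 := by nlinarith [norm_nonneg w]
  -- the two key inequalities for w
  have c1 : ‖1 - w‖ ^ 2 / (1 - ‖w‖ ^ 2) ≤ R₁ := by
    by_contra hcon
    push_neg at hcon
    set Q := ‖1 - w‖ ^ 2 / (1 - ‖w‖ ^ 2) with hQ
    have hmem : z ∈ horocycle 1 ((R₁ + Q) / 2) := ⟨hz, by rw [e1]; linarith⟩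
    obtain ⟨_, hlt⟩ := hinv1 ((R₁ + Q) / 2) (by linarith) hmem
    rw [← hQ] at hlt
    linarith
  have c2 : ‖1 + w‖ ^ 2 / (1 - ‖w‖ ^ 2) ≤ R₂ := by
    by_contra hcon
    push_neg at hcon
    set Q := ‖1 + w‖ ^ 2 / (1 - ‖w‖ ^ 2) with hQ
    have hmem : z ∈ horocycle (-1) ((R₂ + Q) / 2) :=
      ⟨hz, by rw [abs_neg_one_sub, e2]; linarith⟩
    obtain ⟨_, hlt⟩ := hinv2 ((R₂ + Q) / 2) (by linarith) hmem
    rw [abs_neg_one_sub, ← hQ] at hlt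
    linarith
  have mul1 : ‖1 - w‖ ^ 2 ≤ R₁ * (1 - ‖w‖ ^ 2) := by
    rw [div_le_iff₀ hdw] at c1; linarith
  have mul2 : ‖1 + w‖ ^ 2 ≤ R₂ * (1 - ‖w‖ ^ 2) := by
    rw [div_le_iff₀ hdw] at c2; linarith
  have big : ‖1 - w‖ ^ 2 * ‖1 + w‖ ^ 2 ≤ (1 - ‖w‖ ^ 2) ^ 2 := by
    calc ‖1 - w‖ ^ 2 * ‖1 + w‖ ^ 2
        ≤ (R₁ * (1 - ‖w‖ ^ 2)) * (R₂ * (1 - ‖w‖ ^ 2)) :=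
          mul_le_mul mul1 mul2 (sq_nonneg _) (by positivity)
      _ = (R₁ * R₂) * (1 - ‖w‖ ^ 2) ^ 2 := by ring
      _ = (1 - ‖w‖ ^ 2) ^ 2 := by rw [prod]; ring
  have hwim : w.im = 0 := key_im w big
  -- equality for z
  have e1' : ‖1 - z‖ ^ 2 = R₁ * (1 - ‖z‖ ^ 2) := by
    rw [div_eq_iff hd.ne'] at e1; linarith
  have e2' : ‖1 + z‖ ^ 2 = R₂ * (1 - ‖z‖ ^ 2) := by
    rw [div_eq_iff hd.ne'] at e2; linarith
  have hzeq : ‖1 - z‖ ^ 2 * ‖1 + z‖ ^ 2 = (1 - ‖z‖ ^ 2) ^ 2 := by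
    rw [e1', e2']; linear_combination (1 - ‖z‖ ^ 2) ^ 2 * prod
  have hzim : z.im = 0 := key_im z hzeq.le
  -- pass to real parts
  have hzabs : ‖z‖ ^ 2 = z.re ^ 2 := by
    rw [Complex.sq_norm, Complex.normSq_apply, hzim]; ring
  have hwabs : ‖w‖ ^ 2 = w.re ^ 2 := by
    rw [Complex.sq_norm, Complex.normSq_apply, hwim]; ring
  have A1 : ‖1 - z‖ ^ 2 = (1 - z.re) ^ 2 := by
    rw [Complex.sq_norm, Complex.normSq_apply]
    simp [Complex.sub_re, Complex.sub_im, hzim]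
    ring
  have A2 : ‖1 + z‖ ^ 2 = (1 + z.re) ^ 2 := by
    rw [Complex.sq_norm, Complex.normSq_apply]
    simp [Complex.add_re, Complex.add_im, hzim]
    ring
  have B1 : ‖1 - w‖ ^ 2 = (1 - w.re) ^ 2 := by
    rw [Complex.sq_norm, Complex.normSq_apply]
    simp [Complex.sub_re, Complex.sub_im, hwim]
    ring
  have B2 : ‖1 + w‖ ^ 2 = (1 + w.re) ^ 2 := by
    rw [Complex.sq_norm, Complex.normSq_apply]
    simp [Complex.add_re, Complex.add_im, hwim]
    ring
  rw [B1, hwabs] at mul1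
  rw [B2, hwabs] at mul2
  rw [A1, hzabs] at e1'
  rw [A2, hzabs] at e2'
  have hx2 : z.re ^ 2 < 1 := by rw [hzabs] at hd; linarith
  have hu2 : w.re ^ 2 < 1 := by rw [hwabs] at hdw; linarith
  have : w.re = z.re := real_step hx2 hu2 e1' e2' mul1 mul2
  exact Complex.ext this (hwim.trans hzim.symm)

lemma zero_closure_horo1 : (0:ℂ) ∈ closure (horocycle 1 1) := by
  rw [Metric.mem_closure_iff]
  intro ε hε
  set t : ℝ := min (ε / 2) (1 / 2) with ht
  have ht0 : 0 < t := lt_min (by linarith) (by norm_num)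
  have ht1 : t ≤ 1 / 2 := min_le_right _ _
  have hte : t ≤ ε / 2 := min_le_left _ _
  refine ⟨(t : ℂ), ⟨?_, ?_⟩, ?_⟩
  · rw [mem_ball_zero_iff, Complex.norm_real, Real.norm_eq_abs, abs_of_pos ht0]; linarith
  · have h1 : ‖1 - (t:ℂ)‖ = 1 - t := by
      rw [show (1:ℂ) - (t:ℂ) = ((1 - t : ℝ) : ℂ) by push_cast; ring, Complex.norm_real, Real.norm_eq_abs,
        abs_of_pos (by linarith)]
    rw [h1, Complex.norm_real, Real.norm_eq_abs, abs_of_pos ht0, div_lt_one (by nlinarith)]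
    nlinarith
  · rw [dist_comm, dist_zero_right, Complex.norm_real, Real.norm_eq_abs, abs_of_pos ht0]
    linarith

lemma zero_closure_horo2 : (0:ℂ) ∈ closure (horocycle (-1) 1) := by
  rw [Metric.mem_closure_iff]
  intro ε hε
  set t : ℝ := min (ε / 2) (1 / 2) with ht
  have ht0 : 0 < t := lt_min (by linarith) (by norm_num)
  have ht1 : t ≤ 1 / 2 := min_le_right _ _
  have hte : t ≤ ε / 2 := min_le_left _ _
  refine ⟨(-t : ℂ), ⟨?_, ?_⟩, ?_⟩
  · rw [mem_ball_zero_iff]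
    rw [show (-t : ℂ) = ((-t : ℝ) : ℂ) by push_cast; ring, Complex.norm_real,
      Real.norm_eq_abs, abs_of_neg (by linarith)]
    linarith
  · have h1 : ‖(-1:ℂ) - (-t:ℂ)‖ = 1 - t := by
      rw [show (-1:ℂ) - (-t:ℂ) = ((-(1 - t) : ℝ) : ℂ) by push_cast; ring, Complex.norm_real, Real.norm_eq_abs,
        abs_of_neg (by linarith)]
      ring
    have h2 : ‖(-t : ℂ)‖ = t := by
      rw [show (-t : ℂ) = ((-t : ℝ) : ℂ) by push_cast; ring, Complex.norm_real, Real.norm_eq_abs,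
        abs_of_neg (by linarith)]
      ring
    rw [h1, h2, div_lt_one (by nlinarith)]
    nlinarith
  · rw [dist_comm, dist_zero_right]
    rw [show (-t : ℂ) = ((-t : ℝ) : ℂ) by push_cast; ring, Complex.norm_real,
      Real.norm_eq_abs, abs_of_neg (by linarith)]
    linarith

theorem tangency_points_fixed
    (h : ℂ → ℂ)
    (hh : DifferentiableOn ℂ h (ball (0:ℂ) 1))
    (hhm : MapsTo h (ball (0:ℂ) 1) (ball (0:ℂ) 1))
    (hinv1 : ∀ R > 0, MapsTo h (horocycle 1 R) (horocycle 1 R))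
    (hinv2 : ∀ R > 0, MapsTo h (horocycle (-1) R) (horocycle (-1) R)) :
    (0 : ℂ) ∈ frontier (horocycle 1 1) ∩ frontier (horocycle (-1) 1) ∧
    (∀ z ∈ ball (0:ℂ) 1, ∀ R₁ R₂ : ℝ,
      z ∈ closure (horocycle 1 R₁) → z ∈ closure (horocycle (-1) R₂) →
      ‖1 - z‖ ^ 2 / (1 - ‖z‖ ^ 2) = R₁ →
      ‖1 + z‖ ^ 2 / (1 - ‖z‖ ^ 2) = R₂ →
      R₁ * R₂ = 1 → h z = z) ∧
    h 0 = 0 := by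
  have hnot1 : (0:ℂ) ∉ horocycle 1 1 := by
    rintro ⟨-, hlt⟩
    simp at hlt
  have hnot2 : (0:ℂ) ∉ horocycle (-1) 1 := by
    rintro ⟨-, hlt⟩
    simp at hlt
  refine ⟨⟨⟨zero_closure_horo1, fun hc => hnot1 (interior_subset hc)⟩,
    ⟨zero_closure_horo2, fun hc => hnot2 (interior_subset hc)⟩⟩, ?_, ?_⟩
  · intro z hz R₁ R₂ _ _ e1 e2 prod
    exact fix_aux h hhm hinv1 hinv2 z hz R₁ R₂ e1 e2 prod
  · exact fix_aux h hhm hinv1 hinv2 0 (mem_ball_self one_pos) 1 1 (by simp) (by simp)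
      (by norm_num)
end
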